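/- arXiv:1912.02585 — 2 statements merged into one kernel-verified Lean document; each statement's English description precedes it below -/
import Mathlib

section
/- Let (l,k) be the most loaded link of a feasible schedule, and suppose there is a neighboring link (i,j) with p(i,j) ≥ 2 that can transfer one cell to (l,k) preserving feasibility. If x(l,k) > x(i,j)/(1 − 1/p(i,j)), then reassigning one cell from (i,j) to (l,k) yields a feasible schedule whose maximum per-link delay is at most that of the original; hence the original schedule was not strictly optimal. In particular, in every optimal schedule, x(l,k) ≤ x(i,j)/(1 − 1/p(i,j)) for every such neighboring link (i,j). -/
/-!
Writing `x(e) = ⌊q(e)/p(e)⌋ + 1`, the hypothesis says `x(b)·p(b) < x(a)·(p(b) - 1)`. Since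
`q(b) < x(b)·p(b)`, after the transfer `q(b)/(p(b) - 1) < x(a)`, so the load of `b` stays at most
`x(a)`; the load of `a` only drops and all other loads are unchanged. Hence the maximum delay does
not grow, and the new allocation, being feasible and different, contradicts strict optimality.
-/

/-- The paper's load `round (q/p + 0.5)`, which on naturals is `⌊q/p⌋ + 1`. -/
def load (q p : ℕ) : ℕ := if q = 0 then 0 else q / p + 1

lemma round_natCast_div_add_half (n d : ℕ) :
    round ((n : ℝ) / d + 0.5) = ((n / d : ℕ) : ℤ) + 1 := by
  rw [round_eq, add_assoc, show (0.5 : ℝ) + 1 / 2 = 1 by norm_num, Int.floor_add_one,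
    Int.floor_div_natCast, Int.floor_natCast, Int.natCast_div]

lemma load_succ_le {q p : ℕ} (hp : 0 < p) : load q (p + 1) ≤ load q p := by
  unfold load
  split_ifs
  · rfl
  · exact Nat.succ_le_succ (Nat.div_le_div_left (Nat.le_succ p) hp)

lemma load_pred_le_of_mul_lt {q p A : ℕ} (h : load q p * p < A * (p - 1)) :
    load q (p - 1) ≤ A := by
  unfold load at h ⊢
  split_ifs at h ⊢ with hq
  · exact Nat.zero_le A
  · have hp : 0 < p - 1 := Nat.pos_of_ne_zero (by rintro h0; simp [h0] at h)
    have hq_lt : q < (q / p + 1) * p := (Nat.div_lt_iff_lt_mul (by omega)).1 (Nat.lt_succ_self _)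
    exact Nat.div_lt_iff_lt_mul hp |>.2 (hq_lt.trans h)

lemma div_one_sub_inv_lt_iff {y z n : ℕ} (hn : 2 ≤ n) :
    (y : ℝ) / (1 - 1 / n) < z ↔ y * n < z * (n - 1) := by
  have hn' : (1 : ℝ) < n := by exact_mod_cast hn
  rw [one_sub_div (by positivity), div_div_eq_mul_div, div_lt_iff₀ (by linarith),
    ← Nat.cast_lt (α := ℝ)]
  push_cast [Nat.cast_sub (by omega : 1 ≤ n)]
  rfl

section Transfer

variable {E : Type} [DecidableEq E]

def transferCell (p : E → ℕ) (a b : E) : E → ℕ :=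
  Function.update (Function.update p a (p a + 1)) b (p b - 1)

variable (q p : E → ℕ) {a b : E}

lemma transferCell_ne (hpb : 1 ≤ p b) : transferCell p a b ≠ p := fun h ↦ by
  have := congrFun h b
  simp only [transferCell, Function.update_self] at this
  omega

lemma load_transferCell_le (hpa : 0 < p a)
    (hmax : ∀ e, load (q e) (p e) ≤ load (q a) (p a))
    (hlt : load (q b) (p b) * p b < load (q a) (p a) * (p b - 1)) (e : E) :
    load (q e) (transferCell p a b e) ≤ load (q a) (p a) := by
  simp only [transferCell, Function.update_apply]
  split_ifs with heb hea
  · subst heb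
    exact load_pred_le_of_mul_lt hlt
  · subst hea
    exact load_succ_le hpa
  · exact hmax e

end Transfer

theorem stmt_2_general {E : Type} [Fintype E] [Nonempty E] [DecidableEq E]
    (q p : E → ℕ) (S : ℕ)
    (feasible : (E → ℕ) → Prop)
    (a b : E) (hpb : 2 ≤ p b)
    (hp1 : ∀ e, 1 ≤ p e)
    (hfeas' : feasible
      (Function.update (Function.update p a (p a + 1)) b (p b - 1))) :
    let x : (E → ℕ) → E → ℤ :=
      fun pp e => if q e = 0 then 0 else round ((q e : ℝ) / (pp e : ℝ) + 0.5)
    let maxd : (E → ℕ) → ℤ :=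
      fun pp => Finset.univ.sup' Finset.univ_nonempty (fun e => x pp e * (S : ℤ))
    let p' : E → ℕ := Function.update (Function.update p a (p a + 1)) b (p b - 1)
    let strictOpt : Prop :=
      ∀ p'' : E → ℕ, feasible p'' → p'' ≠ p → maxd p < maxd p''
    (∀ e, x p e ≤ x p a) →
    ((((x p b : ℝ) / (1 - 1 / (p b : ℝ)) < (x p a : ℝ)) →
        maxd p' ≤ maxd p ∧ ¬ strictOpt) ∧
     (strictOpt → (x p a : ℝ) ≤ (x p b : ℝ) / (1 - 1 / (p b : ℝ)))) := by
  intro x maxd p' strictOpt hmax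
  have hx (pp : E → ℕ) (e : E) : x pp e = load (q e) (pp e) := by
    simp only [x, load]
    split_ifs <;> simp [round_natCast_div_add_half]
  have hmax_load (e : E) : load (q e) (p e) ≤ load (q a) (p a) := by
    simpa only [hx, Nat.cast_le] using hmax e
  have hmaxd_le (hlt : (x p b : ℝ) / (1 - 1 / (p b : ℝ)) < x p a) : maxd p' ≤ maxd p := by
    simp only [hx, Int.cast_natCast] at hlt
    have hlt_load := (div_one_sub_inv_lt_iff hpb).1 hlt
    refine Finset.sup'_le _ _ fun e _ ↦ ?_
    calc x p' e * S ≤ x p a * S := by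
          gcongr
          rw [hx, hx, Nat.cast_le]
          exact load_transferCell_le q p (hp1 a) hmax_load hlt_load e
      _ ≤ maxd p := Finset.le_sup' (fun e ↦ x p e * S) (Finset.mem_univ a)
  have hnot_opt (hle : maxd p' ≤ maxd p) : ¬ strictOpt := fun hopt ↦
    (hopt p' hfeas' (transferCell_ne p (by omega))).not_ge hle
  exact ⟨fun hlt ↦ ⟨hmaxd_le hlt, hnot_opt (hmaxd_le hlt)⟩,
    fun hopt ↦ not_lt.1 fun hlt ↦ hnot_opt (hmaxd_le hlt) hopt⟩

/-- If the most loaded link a could receive a cell from a neighboring link b with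
    x(a) > x(b)/(1 - 1/p(b)), then the transfer does not increase the maximum delay,
    so the schedule is not strictly optimal; hence every strictly optimal schedule
    satisfies x(a) ≤ x(b)/(1 - 1/p(b)) for all such neighbors b. -/
theorem stmt_2 {E : Type} [Fintype E] [Nonempty E] [DecidableEq E]
    (q p : E → ℕ) (S : ℕ) (hS : 0 < S)
    (feasible : (E → ℕ) → Prop)
    (a b : E) (hab : a ≠ b) (hpb : 2 ≤ p b)
    (hp1 : ∀ e, 1 ≤ p e)
    (hfeas : feasible p)
    (hfeas' : feasible
      (Function.update (Function.update p a (p a + 1)) b (p b - 1))) :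
    let x : (E → ℕ) → E → ℤ :=
      fun pp e => if q e = 0 then 0 else round ((q e : ℝ) / (pp e : ℝ) + 0.5)
    let maxd : (E → ℕ) → ℤ :=
      fun pp => Finset.univ.sup' Finset.univ_nonempty (fun e => x pp e * (S : ℤ))
    let p' : E → ℕ := Function.update (Function.update p a (p a + 1)) b (p b - 1)
    let strictOpt : Prop :=
      ∀ p'' : E → ℕ, feasible p'' → p'' ≠ p → maxd p < maxd p''
    (∀ e, x p e ≤ x p a) →
    ((((x p b : ℝ) / (1 - 1 / (p b : ℝ)) < (x p a : ℝ)) →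
        maxd p' ≤ maxd p ∧ ¬ strictOpt) ∧
     (strictOpt → (x p a : ℝ) ≤ (x p b : ℝ) / (1 - 1 / (p b : ℝ)))) :=
  stmt_2_general q p S feasible a b hpb hp1 hfeas'
end

section
/- Termination of pairwise balancing: repeatedly applying the cell-transfer step (move one cell from the least loaded transferable neighbor to the most loaded link whenever the condition of Lemma 2 is violated) strictly decreases the lexicographically-ordered multiset of link loads, and therefore terminates in finitely many steps on any finite network with integer queues and allocations. -/
/-!
Moving a cell from `b` to `a` replaces the loads `q a / p a` and `q b / p b` by
`q a / (p a + 1)` and `q b / (p b - 1)`, both strictly below `q a / p a`. So the multiset of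
loads drops in the Dershowitz–Manna order (for a linear order, the lexicographic comparison of
the decreasingly sorted loads). Over `ℚ` that order is not well-founded, but with allocations at
most `B` every new load lies in the finite set of values `q e / k` with `k ≤ B`, and ranking the
loads within that set turns the descent into one of multisets of naturals.
-/

open Finset

theorem Multiset.isDershowitzMannaLT_map_univ_of_lt_of_lt {E α : Type*} [Fintype E]
    [DecidableEq E] [Preorder α] {g g' : E → α} {a b : E} (hab : a ≠ b) (ha : g' a < g a)
    (hb : g' b < g a) (hrest : ∀ e, e ≠ a → e ≠ b → g' e = g e) :
    IsDershowitzMannaLT ((univ : Finset E).val.map g') ((univ : Finset E).val.map g) := by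
  set rest := (univ.erase a).erase b
  have huniv : (univ : Finset E).val = a ::ₘ b ::ₘ rest.val := by
    change _ = a ::ₘ b ::ₘ (univ.val.erase a).erase b
    rw [cons_erase, cons_erase] <;> simp [mem_erase_of_ne hab.symm]
  have hrest' : rest.val.map g' = rest.val.map g :=
    map_congr rfl fun e he => by
      simp only [rest, Finset.mem_val, Finset.mem_erase] at he
      exact hrest e he.2.1 he.1
  refine ⟨rest.val.map g, {g' a, g' b}, {g a, g b}, by simp, ?_, ?_, ?_⟩
  · rw [huniv, map_cons, map_cons, hrest', add_comm]
    simp only [insert_eq_cons, cons_add, singleton_add]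
  · rw [huniv, map_cons, map_cons, add_comm]
    simp only [insert_eq_cons, cons_add, singleton_add]
  · simp only [insert_eq_cons, Multiset.mem_cons, Multiset.mem_singleton]
    rintro y (rfl | rfl) <;> exact ⟨g a, by simp, by assumption⟩

namespace PairwiseBalancing

def rank {α : Type*} [LinearOrder α] (V : Finset α) (x : α) : ℕ := #{v ∈ V | v < x}

theorem rank_lt_rank_of_mem {α : Type*} [LinearOrder α] {V : Finset α} {x y : α} (hy : y ∈ V)
    (hyx : y < x) : rank V y < rank V x := by
  refine card_lt_card (ssubset_iff_of_subset ?_ |>.2 ⟨y, ?_, ?_⟩)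
  · exact monotone_filter_right V fun _ _ hv => hv.trans hyx
  · simp [hy, hyx]
  · simp

variable {E : Type*} [Fintype E] (q : E → ℕ) (B : ℕ)

def loadValues : Finset ℚ := (univ ×ˢ range (B + 1)).image fun ek => (q ek.1 : ℚ) / ek.2

theorem div_mem_loadValues (e : E) {k : ℕ} (hk : k ≤ B) : (q e : ℚ) / k ∈ loadValues q B :=
  mem_image.2 ⟨(e, k), by simp [Nat.lt_succ_of_le hk], rfl⟩

def loadRanks (p : E → ℕ) : Multiset ℕ :=
  (univ : Finset E).val.map fun e => rank (loadValues q B) ((q e : ℚ) / p e)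

variable {q B} [DecidableEq E]

theorem loadRanks_transfer_lt {p p' : E → ℕ} {a b : E} (hab : a ≠ b) (ha : 1 ≤ p a)
    (hb : 2 ≤ p b) (hlt : (q b : ℚ) / ((p b : ℚ) - 1) < (q a : ℚ) / (p a : ℚ))
    (hp' : p' = Function.update (Function.update p a (p a + 1)) b (p b - 1))
    (hB : ∀ e, p' e ≤ B) :
    Multiset.IsDershowitzMannaLT (loadRanks q B p') (loadRanks q B p) := by
  have hp'a : p' a = p a + 1 := by simp [hp', hab]
  have hp'b : p' b = p b - 1 := by simp [hp']
  have hpa : (0 : ℚ) < p a := by exact_mod_cast ha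
  have hqa : (0 : ℚ) < q a := by
    have hb1 : (1 : ℚ) < p b := by exact_mod_cast hb
    refine (div_pos_iff_of_pos_right hpa).1 (lt_of_le_of_lt ?_ hlt)
    exact div_nonneg (Nat.cast_nonneg _) (sub_nonneg.2 hb1.le)
  refine Multiset.isDershowitzMannaLT_map_univ_of_lt_of_lt hab ?_ ?_ fun e hea heb => ?_
  · refine rank_lt_rank_of_mem (div_mem_loadValues q B a (hB a)) ?_
    rw [hp'a, Nat.cast_succ]
    exact div_lt_div_of_pos_left hqa hpa (lt_add_one _)
  · refine rank_lt_rank_of_mem (div_mem_loadValues q B b (hB b)) ?_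
    rwa [hp'b, Nat.cast_sub (by omega), Nat.cast_one]
  · simp [hp', hea, heb]

end PairwiseBalancing

open PairwiseBalancing in
/-- Pairwise load-balancing terminates: with bounded integer allocations there is
    no infinite sequence of single-cell transfer steps, each of which moves a cell
    from a less loaded link b to a more loaded link a. -/
theorem stmt_17 {E : Type} [Fintype E] [DecidableEq E] (q : E → ℕ) (B : ℕ) :
    let step : (E → ℕ) → (E → ℕ) → Prop := fun p p' =>
      ∃ a b, a ≠ b ∧ 1 ≤ p a ∧ 2 ≤ p b ∧
        (q b : ℚ) / ((p b : ℚ) - 1) < (q a : ℚ) / (p a : ℚ) ∧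
        p' = Function.update (Function.update p a (p a + 1)) b (p b - 1)
    ¬ ∃ f : ℕ → (E → ℕ), (∀ n e, f n e ≤ B) ∧ ∀ n, step (f n) (f (n + 1)) := by
  rintro step ⟨f, hfB, hf⟩
  have hdesc : ∀ n, (loadRanks q B (f (n + 1))).IsDershowitzMannaLT (loadRanks q B (f n)) := by
    intro n
    obtain ⟨a, b, hab, ha, hb, hlt, hupd⟩ := hf n
    exact loadRanks_transfer_lt hab ha hb hlt hupd (hfB (n + 1))
  exact (wellFounded_iff_isEmpty_descending_chain.1 Multiset.wellFounded_isDershowitzMannaLT).elim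
    ⟨fun n => loadRanks q B (f n), hdesc⟩
end
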